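/- Let X ∈ ℝ^{n×p}, y ∈ ℝ^n, λ ≥ 0, μ ≥ 0, and suppose (β*, z*) ∈ ℝ^p × {0,1}^n minimizes the penalized least trimmed squares objective F(β, z) = (1/2)∑_{i=1}^n (y_i − x_iᵀβ)²(1 − z_i) + (λ/2)‖β‖₂² + μ∑_{i=1}^n z_i over ℝ^p × {0,1}^n. Then for every i ∈ {1,…,n}: if z_i* = 0 then |y_i − x_iᵀβ*| ≤ √(2μ), and if z_i* = 1 then |y_i − x_iᵀβ*| ≥ √(2μ). -/
import Mathlib


open Finset

/-- any optimal solution of the penalized LTS problem satisfies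
the residual-threshold conditions. -/
theorem stmt_1 (n p : ℕ) (X : Matrix (Fin n) (Fin p) ℝ) (y : Fin n → ℝ)
    (lam mu : ℝ) (hlam : 0 ≤ lam) (hmu : 0 ≤ mu)
    (F : (Fin p → ℝ) → (Fin n → ℝ) → ℝ)
    (hF : ∀ β z, F β z = (1/2) * ∑ i, (y i - ∑ j, X i j * β j)^2 * (1 - z i)
        + lam/2 * ∑ j, (β j)^2 + mu * ∑ i, z i)
    (βs : Fin p → ℝ) (zs : Fin n → ℝ) (hzs : ∀ i, zs i = 0 ∨ zs i = 1)
    (hopt : ∀ (β : Fin p → ℝ) (z : Fin n → ℝ), (∀ i, z i = 0 ∨ z i = 1) →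
        F βs zs ≤ F β z) :
    ∀ i, (zs i = 0 → |y i - ∑ j, X i j * βs j| ≤ Real.sqrt (2*mu)) ∧
         (zs i = 1 → Real.sqrt (2*mu) ≤ |y i - ∑ j, X i j * βs j|) := by
  intro i
  set r := y i - ∑ j, X i j * βs j with hr
  have key : ∀ b : ℝ, (b = 0 ∨ b = 1) →
      r^2 * (1 - zs i) / 2 + mu * zs i ≤ r^2 * (1 - b) / 2 + mu * b := by
    intro b hb
    have hzb : ∀ k, Function.update zs i b k = 0 ∨ Function.update zs i b k = 1 := by
      intro k
      rcases eq_or_ne k i with rfl | hk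
      · simpa using hb
      · simpa [Function.update_of_ne hk] using hzs k
    have h := hopt βs (Function.update zs i b) hzb
    rw [hF, hF] at h
    have hsplit : ∀ (z : Fin n → ℝ),
        (∑ k, (y k - ∑ j, X k j * βs j)^2 * (1 - z k))
          = (y i - ∑ j, X i j * βs j)^2 * (1 - z i)
            + ∑ k ∈ Finset.univ.erase i, (y k - ∑ j, X k j * βs j)^2 * (1 - z k) := by
      intro z
      rw [← Finset.add_sum_erase _ _ (Finset.mem_univ i)]
    have hsplit2 : ∀ (z : Fin n → ℝ),
        (∑ k, z k) = z i + ∑ k ∈ Finset.univ.erase i, z k := by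
      intro z
      rw [← Finset.add_sum_erase _ _ (Finset.mem_univ i)]
    rw [hsplit, hsplit, hsplit2, hsplit2] at h
    have he1 : ∑ k ∈ Finset.univ.erase i, (y k - ∑ j, X k j * βs j)^2 * (1 - Function.update zs i b k)
        = ∑ k ∈ Finset.univ.erase i, (y k - ∑ j, X k j * βs j)^2 * (1 - zs k) := by
      apply Finset.sum_congr rfl
      intro k hk
      rw [Function.update_of_ne (Finset.ne_of_mem_erase hk)]
    have he2 : ∑ k ∈ Finset.univ.erase i, Function.update zs i b k
        = ∑ k ∈ Finset.univ.erase i, zs k := by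
      apply Finset.sum_congr rfl
      intro k hk
      rw [Function.update_of_ne (Finset.ne_of_mem_erase hk)]
    rw [he1, he2, Function.update_self] at h
    simp only [← hr] at h
    nlinarith [h]
  constructor
  · intro h0
    have h1 := key 1 (Or.inr rfl)
    rw [h0] at h1
    have hr2 : r^2 ≤ 2 * mu := by ring_nf at h1 ⊢; linarith
    calc |r| = Real.sqrt (r^2) := (Real.sqrt_sq_eq_abs r).symm
      _ ≤ Real.sqrt (2*mu) := Real.sqrt_le_sqrt hr2
  · intro h1
    have h0 := key 0 (Or.inl rfl)
    rw [h1] at h0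
    have hr2 : 2 * mu ≤ r^2 := by ring_nf at h0 ⊢; linarith
    calc Real.sqrt (2*mu) ≤ Real.sqrt (r^2) := Real.sqrt_le_sqrt hr2
      _ = |r| := Real.sqrt_sq_eq_abs r
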